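/- arXiv:1705.01975 — 3 statements merged into one kernel-verified Lean document; each statement's English description precedes it below -/
import Mathlib

section
/- Let M be a module over a ring R, let P and D be idempotent endomorphisms of M, and set E = id − D − P. If E is an automorphism of M, then E maps ker(id − P) isomorphically onto ker(id − D), and maps ker(P) isomorphically onto ker(D). In particular ker(id − P) ≅ ker(id − D) and ker(P) ≅ ker(D) as R-modules. -/
theorem automorphism_maps_kernels
    {R : Type*} [Ring R] {M : Type*} [AddCommGroup M] [Module R M]
    (P D : M →ₗ[R] M) (hP : P ∘ₗ P = P) (hD : D ∘ₗ D = D)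
    (E : M →ₗ[R] M) (hE : E = LinearMap.id - D - P)
    (hbij : Function.Bijective E) :
    Submodule.map E (LinearMap.ker (LinearMap.id - P)) =
        LinearMap.ker (LinearMap.id - D) ∧
    Submodule.map E (LinearMap.ker P) = LinearMap.ker D ∧
    Nonempty ((LinearMap.ker (LinearMap.id - P)) ≃ₗ[R]
        (LinearMap.ker (LinearMap.id - D))) ∧
    Nonempty ((LinearMap.ker P) ≃ₗ[R] (LinearMap.ker D)) := by
  have hP' : P * P = P := hP
  have hD' : D * D = D := hD
  have h1 : (LinearMap.id - D) ∘ₗ E = E ∘ₗ (LinearMap.id - P) := by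
    subst hE
    show (1 - D) * (1 - D - P) = (1 - D - P) * (1 - P)
    simp only [mul_sub, sub_mul, one_mul, mul_one, hP', hD']
    abel
  have h2 : D ∘ₗ E = E ∘ₗ P := by
    subst hE
    show D * (1 - D - P) = (1 - D - P) * P
    simp only [mul_sub, sub_mul, one_mul, mul_one, hP', hD']
    abel
  have key : ∀ (A B : M →ₗ[R] M), A ∘ₗ E = E ∘ₗ B →
      Submodule.map E (LinearMap.ker B) = LinearMap.ker A := by
    intro A B h
    ext y
    simp only [Submodule.mem_map, LinearMap.mem_ker]
    constructor
    · rintro ⟨x, hx, rfl⟩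
      have := congrArg (fun f => f x) h
      simp only [LinearMap.comp_apply] at this
      rw [this, hx, map_zero]
    · intro hy
      obtain ⟨x, rfl⟩ := hbij.2 y
      refine ⟨x, ?_, rfl⟩
      have := congrArg (fun f => f x) h
      simp only [LinearMap.comp_apply] at this
      rw [this] at hy
      exact hbij.1 (by simpa using hy)
  have k1 := key _ _ h1
  have k2 := key _ _ h2
  refine ⟨k1, k2, ?_, ?_⟩
  · exact ⟨((LinearEquiv.ofBijective E hbij).submoduleMap _).trans
      (LinearEquiv.ofEq _ _ (by exact k1))⟩
  · exact ⟨((LinearEquiv.ofBijective E hbij).submoduleMap _).trans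
      (LinearEquiv.ofEq _ _ (by exact k2))⟩
end

section
/- Let (I, ≤) be a finite poset, (M_i)_{i∈I} a family of R-modules, and P an idempotent endomorphism of M = ⊕_{i∈I} M_i whose components satisfy P_{i,j} = 0 unless j ≤ i. Define the 'diagonal' endomorphism D of M by D_{i,i} = P_{i,i} and D_{i,j} = 0 for i ≠ j. Then E := id − D − P is an automorphism of M, and consequently ker(id − P) ≅ ⊕_{i∈I} ker(id − P_{i,i}) and ker(P) ≅ ⊕_{i∈I} ker(P_{i,i}). -/
open DirectSum

section Aux
variable {R : Type*} [Ring R] {I : Type*} [Fintype I] [DecidableEq I]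
  {M : I → Type*} [∀ i, AddCommGroup (M i)] [∀ i, Module R (M i)]

private lemma aux_apply_component {N : I → Type*} [∀ i, AddCommGroup (N i)]
    [∀ i, Module R (N i)]
    (T : (⨁ i, N i) →ₗ[R] ⨁ i, M i) (x : ⨁ i, N i) (i : I) :
    (T x) i = ∑ j, (T (DirectSum.lof R I N j (x j))) i := by
  conv_lhs => rw [← DirectSum.sum_univ_of x]
  rw [map_sum, DFinsupp.finset_sum_apply]
  rfl

private lemma aux_nilpotent [PartialOrder I] (T : Module.End R (⨁ i, M i))
    (h : ∀ i j (m : M j), ¬ j < i → (T (DirectSum.lof R I M j m)) i = 0) :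
    IsNilpotent T := by
  classical
  refine ⟨Fintype.card I + 1, ?_⟩
  set r : I → ℕ := fun i => (Finset.univ.filter (fun j => j ≤ i)).card with hr
  have hrlt : ∀ {j i : I}, j < i → r j < r i := by
    intro j i hji
    apply Finset.card_lt_card
    constructor
    · intro k hk
      simp only [Finset.mem_filter, Finset.mem_univ, true_and] at hk ⊢
      exact hk.trans hji.le
    · intro hsub
      have := hsub (Finset.mem_filter.2 ⟨Finset.mem_univ i, le_rfl⟩)
      simp only [Finset.mem_filter, Finset.mem_univ, true_and] at this
      exact absurd this (not_le_of_gt hji)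
  have key : ∀ (k : ℕ) (x : ⨁ i, M i) (i : I), r i ≤ k → ((T ^ k) x) i = 0 := by
    intro k
    induction k with
    | zero =>
      intro x i hi
      have : 0 < r i := Finset.card_pos.2 ⟨i, Finset.mem_filter.2 ⟨Finset.mem_univ i, le_rfl⟩⟩
      omega
    | succ k ih =>
      intro x i hi
      rw [pow_succ', Module.End.mul_apply, aux_apply_component]
      refine Finset.sum_eq_zero fun j _ => ?_
      by_cases hji : j < i
      · have hj : r j ≤ k := by have := hrlt hji; omega
        rw [ih x j hj]
        simp
      · exact h i j _ hji
  apply LinearMap.ext fun x => ?_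
  apply DFinsupp.ext fun i => ?_
  have hri : r i ≤ Fintype.card I + 1 := by
    have h1 : r i ≤ Fintype.card I :=
      le_of_le_of_eq (Finset.card_filter_le _ _) Finset.card_univ
    omega
  rw [key _ x i hri]
  rfl

private lemma aux_ker_equiv (F : (⨁ i, M i) →ₗ[R] ⨁ i, M i) (f : ∀ i, M i →ₗ[R] M i)
    (h : ∀ (x : ⨁ i, M i) i, (F x) i = f i (x i)) :
    Nonempty (LinearMap.ker F ≃ₗ[R] ⨁ i, LinearMap.ker (f i)) := by
  classical
  set T : (⨁ i, LinearMap.ker (f i)) →ₗ[R] ⨁ i, M i :=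
    DirectSum.toModule R I _ fun i => (DirectSum.lof R I M i) ∘ₗ (LinearMap.ker (f i)).subtype
    with hTdef
  have hT : ∀ (y : ⨁ i, LinearMap.ker (f i)) (i : I), (T y) i = (y i : M i) := by
    intro y i
    rw [aux_apply_component]
    rw [Finset.sum_eq_single i]
    · rw [hTdef, DirectSum.toModule_lof]
      simp [DirectSum.lof_apply]
    · intro j _ hj
      rw [hTdef, DirectSum.toModule_lof]
      exact DirectSum.of_eq_of_ne _ _ _ (by exact_mod_cast hj.symm)
    · intro hi; exact absurd (Finset.mem_univ i) hi
  have hmem : ∀ y, T y ∈ LinearMap.ker F := by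
    intro y
    rw [LinearMap.mem_ker]
    apply DFinsupp.ext fun i => ?_
    rw [h, hT]
    have := (y i).2
    rw [LinearMap.mem_ker] at this
    simpa using this
  set ψ : (⨁ i, LinearMap.ker (f i)) →ₗ[R] LinearMap.ker F :=
    LinearMap.codRestrict _ T hmem with hψ
  have hinj : Function.Injective ψ := by
    intro a b hab
    have : T a = T b := congrArg Subtype.val hab
    apply DFinsupp.ext fun i => ?_
    have := congrFun (congrArg (DFunLike.coe) this) i
    rw [hT, hT] at this
    exact Subtype.ext this
  have hsurj : Function.Surjective ψ := by
    intro x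
    have hx : ∀ i, f i ((x : ⨁ i, M i) i) = 0 := by
      intro i
      rw [← h]
      have : F (x : ⨁ i, M i) = 0 := x.2
      rw [this]
      rfl
    set v : ∀ i, LinearMap.ker (f i) := fun i => ⟨(x : ⨁ i, M i) i, LinearMap.mem_ker.2 (hx i)⟩
    refine ⟨(DirectSum.linearEquivFunOnFintype R I (fun i => LinearMap.ker (f i))).symm v, ?_⟩
    have hv : ∀ j, ((DirectSum.linearEquivFunOnFintype R I
        (fun i => LinearMap.ker (f i))).symm v) j = v j := by
      intro j
      have := (DirectSum.linearEquivFunOnFintype R I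
        (fun i => LinearMap.ker (f i))).apply_symm_apply v
      exact congrFun this j
    apply Subtype.ext
    apply DFinsupp.ext fun i => ?_
    show (T _) i = _
    rw [hT, hv]
  exact ⟨(LinearEquiv.ofBijective ψ ⟨hinj, hsurj⟩).symm⟩

end Aux

theorem triangular_idempotent_kernel_decomposition
    {R : Type*} [Ring R] {I : Type*} [Fintype I] [DecidableEq I] [PartialOrder I]
    (M : I → Type*) [∀ i, AddCommGroup (M i)] [∀ i, Module R (M i)]
    (P : (⨁ i, M i) →ₗ[R] (⨁ i, M i)) (hP : P ∘ₗ P = P)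
    (htri : ∀ i j, ¬ j ≤ i →
      (DirectSum.component R I M i) ∘ₗ P ∘ₗ (DirectSum.lof R I M j) = 0)
    (D : (⨁ i, M i) →ₗ[R] (⨁ i, M i))
    (hDdiag : ∀ i, (DirectSum.component R I M i) ∘ₗ D ∘ₗ (DirectSum.lof R I M i) =
      (DirectSum.component R I M i) ∘ₗ P ∘ₗ (DirectSum.lof R I M i))
    (hDoff : ∀ i j, i ≠ j →
      (DirectSum.component R I M i) ∘ₗ D ∘ₗ (DirectSum.lof R I M j) = 0) :
    Function.Bijective ⇑(LinearMap.id - D - P : (⨁ i, M i) →ₗ[R] (⨁ i, M i)) ∧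
    Nonempty ((LinearMap.ker (LinearMap.id - P)) ≃ₗ[R]
      (⨁ i, LinearMap.ker (LinearMap.id -
        ((DirectSum.component R I M i) ∘ₗ P ∘ₗ (DirectSum.lof R I M i))))) ∧
    Nonempty ((LinearMap.ker P) ≃ₗ[R]
      (⨁ i, LinearMap.ker
        ((DirectSum.component R I M i) ∘ₗ P ∘ₗ (DirectSum.lof R I M i)))) := by
  classical
  set d : ∀ i, M i →ₗ[R] M i :=
    fun i => (DirectSum.component R I M i) ∘ₗ P ∘ₗ (DirectSum.lof R I M i) with hd_def
  -- pointwise forms of the hypotheses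
  have htri' : ∀ i j (m : M j), ¬ j ≤ i → (P (DirectSum.lof R I M j m)) i = 0 :=
    fun i j m h => LinearMap.congr_fun (htri i j h) m
  have hDdiag' : ∀ i (m : M i), (D (DirectSum.lof R I M i m)) i = d i m :=
    fun i m => LinearMap.congr_fun (hDdiag i) m
  have hDoff' : ∀ i j (m : M j), i ≠ j → (D (DirectSum.lof R I M j m)) i = 0 :=
    fun i j m h => LinearMap.congr_fun (hDoff i j h) m
  have hd' : ∀ i (m : M i), d i m = (P (DirectSum.lof R I M i m)) i := fun i m => rfl
  -- D acts diagonally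
  have hDapp : ∀ (x : ⨁ i, M i) (i : I), (D x) i = d i (x i) := by
    intro x i
    rw [aux_apply_component D x i, Finset.sum_eq_single i]
    · exact hDdiag' i (x i)
    · intro j _ hj
      exact hDoff' i j (x j) (Ne.symm hj)
    · intro hi; exact absurd (Finset.mem_univ i) hi
  have hPP : ∀ x, P (P x) = P x := fun x => LinearMap.congr_fun hP x
  -- the diagonal components are idempotent
  have hdid : ∀ i (m : M i), d i (d i m) = d i m := by
    intro i m
    set y := P (DirectSum.lof R I M i m) with hy
    have h1 : (P y) i = (P (DirectSum.lof R I M i (y i))) i := by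
      rw [aux_apply_component P y i, Finset.sum_eq_single i]
      · intro j _ hj
        by_cases hji : j ≤ i
        · have : ¬ i ≤ j := fun h => hj (le_antisymm hji h)
          have hyj : y j = 0 := htri' j i m this
          rw [hyj]
          simp
        · exact htri' i j (y j) hji
      · intro hi; exact absurd (Finset.mem_univ i) hi
    have h2 : (P y) i = y i := by rw [hy, hPP]
    have e1 : d i (d i m) = (P (DirectSum.lof R I M i (y i))) i := rfl
    have e2 : d i m = y i := rfl
    rw [e1, ← h1, h2, e2]
  -- D is idempotent
  have hDD : D * D = D := by
    apply LinearMap.ext fun x => ?_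
    apply DFinsupp.ext fun i => ?_
    rw [Module.End.mul_apply, hDapp, hDapp, hdid]
  have hPmul : P * P = P := hP
  -- the endomorphism E and its factorization
  set E : Module.End R (⨁ i, M i) := 1 - D - P with hE_def
  set u : Module.End R (⨁ i, M i) := 1 - (D + D) with hu_def
  set N : Module.End R (⨁ i, M i) := P - D with hN_def
  have hu : u * u = 1 := by
    rw [hu_def]
    simp only [sub_mul, mul_sub, add_mul, mul_add, one_mul, mul_one, hDD]
    abel
  have htriN : ∀ i j (m : M j), ¬ j < i → ((u * N) (DirectSum.lof R I M j m)) i = 0 := by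
    intro i j m hji
    rw [Module.End.mul_apply]
    set y := N (DirectSum.lof R I M j m) with hy
    have hyi : y i = 0 := by
      rw [hy, hN_def, LinearMap.sub_apply, DFinsupp.sub_apply]
      by_cases hji' : j = i
      · subst hji'
        rw [hDdiag' j m, hd']
        abel
      · have hle : ¬ j ≤ i := fun h => hji (lt_of_le_of_ne h hji')
        rw [htri' i j m hle, hDoff' i j m (Ne.symm hji')]
        abel
    rw [hu_def, LinearMap.sub_apply, DFinsupp.sub_apply, Module.End.one_apply,
      LinearMap.add_apply, DFinsupp.add_apply, hDapp, hyi]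
    simp
  have hnilp : IsNilpotent (u * N) := aux_nilpotent (u * N) htriN
  have hEfact : E = u * (1 - u * N) := by
    have h1 : u * (1 - u * N) = u - u * u * N := by
      rw [mul_sub, mul_one, mul_assoc]
    rw [h1, hu, one_mul, hE_def, hu_def, hN_def]
    abel
  have hEunit : IsUnit E := by
    rw [hEfact]
    exact (IsUnit.mul ⟨⟨u, u, hu, hu⟩, rfl⟩ hnilp.isUnit_one_sub)
  have hbij : Function.Bijective ⇑E := (Module.End.isUnit_iff E).mp hEunit
  set e : (⨁ i, M i) ≃ₗ[R] ⨁ i, M i := LinearEquiv.ofBijective E hbij with he_def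
  have hecoe : ∀ x, e x = E x := fun x => rfl
  -- intertwining relations
  have hEP : E * P = D * E := by
    have h1 : E * P = P - D * P - P * P := by
      rw [hE_def, sub_mul, sub_mul, one_mul]
    have h2 : D * E = D - D * D - D * P := by
      rw [hE_def, mul_sub, mul_sub, mul_one, sub_sub]
    rw [h1, h2, hPmul, hDD]; abel
  have hEQ : E * (1 - P) = (1 - D) * E := by
    have h1 : E * (1 - P) = E - E * P := by rw [mul_sub, mul_one]
    have h2 : (1 - D) * E = E - D * E := by rw [sub_mul, one_mul]
    rw [h1, h2, hEP]
  -- transport of kernels along e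
  have key : ∀ (A B : Module.End R (⨁ i, M i)), E * A = B * E →
      Submodule.map (e : (⨁ i, M i) →ₗ[R] ⨁ i, M i) (LinearMap.ker A) = LinearMap.ker B := by
    intro A B hAB
    ext y
    simp only [Submodule.mem_map, LinearMap.mem_ker, LinearEquiv.coe_coe]
    constructor
    · rintro ⟨x, hx, rfl⟩
      have h1 := LinearMap.congr_fun hAB x
      rw [Module.End.mul_apply, Module.End.mul_apply, hx, map_zero] at h1
      rw [hecoe, ← h1]
    · intro hy
      refine ⟨e.symm y, ?_, e.apply_symm_apply y⟩
      have h1 := LinearMap.congr_fun hAB (e.symm y)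
      rw [Module.End.mul_apply, Module.End.mul_apply] at h1
      have h2 : E (e.symm y) = y := by rw [← hecoe, e.apply_symm_apply]
      rw [h2, hy] at h1
      exact hbij.1 (by rw [h1, map_zero])
  refine ⟨hbij, ?_, ?_⟩
  · -- ker (1 - P) ≃ ⨁ ker (1 - d i)
    have hmap := key (1 - P) (1 - D) hEQ
    have heq := (e.submoduleMap (LinearMap.ker (1 - P : Module.End R (⨁ i, M i)))).trans
      (LinearEquiv.ofEq _ _ hmap)
    obtain ⟨hdiag⟩ := aux_ker_equiv (1 - D : Module.End R (⨁ i, M i))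
      (fun i => 1 - d i) (by
        intro x i
        rw [LinearMap.sub_apply, DFinsupp.sub_apply, Module.End.one_apply, hDapp,
          LinearMap.sub_apply, Module.End.one_apply])
    exact ⟨heq.trans hdiag⟩
  · -- ker P ≃ ⨁ ker (d i)
    have hmap := key P D hEP
    have heq := (e.submoduleMap (LinearMap.ker P)).trans (LinearEquiv.ofEq _ _ hmap)
    obtain ⟨hdiag⟩ := aux_ker_equiv D d hDapp
    exact ⟨heq.trans hdiag⟩
end

section
/- Let T be an irreducible topological space and let f_1, …, f_n : T → ℕ be finitely many upper semicontinuous functions (i.e. for each i and each k, the set {t : f_i(t) ≥ k} is closed). If the sum f_1 + … + f_n is constant on T, then each f_i is constant on T. -/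
theorem usc_summands_of_constant_sum_are_constant
    {T : Type*} [TopologicalSpace T] [IrreducibleSpace T]
    {n : ℕ} (f : Fin n → T → ℕ)
    (husc : ∀ i k, IsClosed {t : T | k ≤ f i t})
    (hsum : ∀ t t' : T, ∑ i, f i t = ∑ i, f i t') :
    ∀ i, ∀ t t' : T, f i t = f i t' := by
  obtain ⟨t0⟩ : Nonempty T := IrreducibleSpace.toNonempty
  -- minimum values
  set m : Fin n → ℕ := fun i => sInf (Set.range (f i)) with hm
  have hrange : ∀ i, (Set.range (f i)).Nonempty := fun i => ⟨f i t0, t0, rfl⟩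
  have hle : ∀ i t, m i ≤ f i t := fun i t => Nat.sInf_le ⟨t, rfl⟩
  -- the sets where the minimum is attained
  set U : Fin n → Set T := fun i => {t | f i t ≤ m i} with hU
  have hUopen : ∀ i, IsOpen (U i) := by
    intro i
    have := (husc i (m i + 1)).isOpen_compl
    convert this using 1
    ext t
    simp [hU, Nat.lt_succ_iff]
  have hUne : ∀ i, (U i).Nonempty := by
    intro i
    obtain ⟨t, ht⟩ := Nat.sInf_mem (hrange i)
    exact ⟨t, le_of_eq ht⟩
  -- finite intersection of nonempty opens is dense, hence nonempty
  have hdense : ∀ s : Finset (Fin n), IsOpen (⋂ i ∈ s, U i) ∧ Dense (⋂ i ∈ s, U i) := by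
    intro s
    induction s using Finset.induction with
    | empty => simp [dense_univ]
    | @insert a s hx ih =>
      rw [Finset.set_biInter_insert]
      exact ⟨(hUopen a).inter ih.1,
        ((hUopen a).dense (hUne a)).inter_of_isOpen_left ih.2 (hUopen a)⟩
  obtain ⟨t1, ht1⟩ : (⋂ i ∈ (Finset.univ : Finset (Fin n)), U i).Nonempty :=
    (hdense Finset.univ).2.nonempty
  have ht1' : ∀ i, f i t1 = m i := by
    intro i
    have := Set.mem_iInter₂.1 ht1 i (Finset.mem_univ i)
    exact le_antisymm this (hle i t1)
  -- sum at t1 equals sum of minima, so every point attains all minima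
  have key : ∀ t i, f i t = m i := by
    intro t i
    have hsum' : ∑ j, f j t = ∑ j, m j := by
      rw [hsum t t1]; exact Finset.sum_congr rfl fun j _ => ht1' j
    by_contra h
    have hlt : m i < f i t := lt_of_le_of_ne (hle i t) (Ne.symm h)
    have : ∑ j, m j < ∑ j, f j t :=
      Finset.sum_lt_sum (fun j _ => hle j t) ⟨i, Finset.mem_univ i, hlt⟩
    omega
  intro i t t'
  rw [key t i, key t' i]
end
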